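/- arXiv:2503.09384 — 3 statements merged into one kernel-verified Lean document; each statement's English description precedes it below -/
import Mathlib

section
/- Let n, s > 0 be integers with n a power of 2, and let ε₀, δ₀ ∈ (0,1]. Then there exist a universe X = [n·s], a base class B ⊆ {±1}^X with |B| = (2n)^s, the reference class F = {±1}^X consisting of all functions X → {±1}, and a (1/√n, ε₀, δ₀, m₀, F, B) agnostic weak learner, for every m₀ ≥ ⌈8·ln(2|B|/δ₀)/ε₀²⌉. -/
open MeasureTheory Real
open scoped ENNReal NNReal

noncomputable section

namespace Agb

/-- signed value of a boolean label: `true ↦ 1`, `false ↦ -1`. -/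
def bval (b : Bool) : ℝ := if b then 1 else -1

variable {X : Type*}

/-- a hypothesis is binary (±1-valued) -/
def IsBinary (h : X → ℝ) : Prop := ∀ x, h x = 1 ∨ h x = -1

/-- correlation of a hypothesis under a distribution on `X × Bool` -/
def corr [MeasurableSpace X] (D : Measure (X × Bool)) (h : X → ℝ) : ℝ :=
  ∫ p, bval p.2 * h p.1 ∂D

/-- error of a classifier under a distribution on `X × Bool` -/
def err [MeasurableSpace X] (D : Measure (X × Bool)) (h : X → ℝ) : ℝ :=
  (D {p | h p.1 ≠ bval p.2}).toReal

/-- `lam`-margin loss of `g` under a distribution on `X × Bool` -/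
def mloss [MeasurableSpace X] (D : Measure (X × Bool)) (lam : ℝ) (g : X → ℝ) : ℝ :=
  (D {p | bval p.2 * g p.1 ≤ lam}).toReal

/-- the `m`-fold product (i.i.d. sample) measure -/
def iid {α : Type*} [MeasurableSpace α] (D : Measure α) (m : ℕ) :
    Measure (Fin m → α) :=
  Measure.pi fun _ => D

/-- truncated logarithm -/
def Ln (x : ℝ) : ℝ := Real.log (max x (Real.exp 1))

/-- `H` shatters the points `x` -/
def Shatters (H : Set (X → ℝ)) {d : ℕ} (x : Fin d → X) : Prop :=
  ∀ b : Fin d → Bool, ∃ h ∈ H, ∀ i, h (x i) = bval (b i)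

/-- the VC dimension of `H` is at most `d` -/
def VCLe (H : Set (X → ℝ)) (d : ℕ) : Prop :=
  ∀ x : Fin (d + 1) → X, Function.Injective x → ¬ Shatters H x

/-- `H` α-fat-shatters the points `x` with levels `r` -/
def FatShatters (H : Set (X → ℝ)) (α : ℝ) {d : ℕ} (x : Fin d → X) (r : Fin d → ℝ) : Prop :=
  ∀ b : Fin d → Bool, ∃ h ∈ H, ∀ i,
    (b i = true → r i + α ≤ h (x i)) ∧ (b i = false → h (x i) ≤ r i - α)

/-- `d` is the fat-shattering dimension of `H` at level `α` -/
def IsFatDim (H : Set (X → ℝ)) (α : ℝ) (d : ℕ) : Prop :=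
  IsGreatest {k : ℕ | ∃ (x : Fin k → X) (r : Fin k → ℝ), FatShatters H α x r} d

/-- `(γ, ε₀, δ₀, m₀, F, H)` agnostic weak learner -/
def IsAWL [MeasurableSpace X] (γ ε₀ δ₀ : ℝ) (m₀ : ℕ) (F H : Set (X → ℝ))
    (W : List (X × Bool) → X → ℝ) : Prop :=
  (∀ S, W S ∈ H) ∧
  ∀ D : Measure (X × Bool), IsProbabilityMeasure D →
    ENNReal.ofReal (1 - δ₀) ≤
      iid D m₀ {S | γ * (⨆ f ∈ F, corr D f) - ε₀ ≤ corr D (W (List.ofFn S))}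

/-- sign function, with `sign 0 = 1` -/
def rsign (x : ℝ) : ℝ := if 0 ≤ x then 1 else -1

/-- empirical `lam`-margin loss on a finite sample -/
def empLoss {m : ℕ} (S : Fin m → X × Bool) (lam : ℝ) (g : X → ℝ) : ℝ :=
  (∑ i, if bval (S i).2 * g (S i).1 ≤ lam then (1 : ℝ) else 0) / m

/-- truncation of `v` at level `γ` -/
def truncAt (γ : ℝ) (v : X → ℝ) : X → ℝ := fun x => max (-γ) (min γ (v x))

/-- `N` is an `ε`-cover of `G` in sup norm over the points `x` -/
def IsCover {k : ℕ} (x : Fin k → X) (G : Set (X → ℝ)) (ε : ℝ) (N : Set (X → ℝ)) : Prop :=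
  ∀ g ∈ G, ∃ g' ∈ N, ∀ i, |g (x i) - g' (x i)| ≤ ε

/-- minimal size of a finite `ε`-cover of `G` over the points `x` (∞ if none exists) -/
def covNum {k : ℕ} (x : Fin k → X) (G : Set (X → ℝ)) (ε : ℝ) : ℝ≥0∞ :=
  ⨅ (N : Finset (X → ℝ)) (_ : IsCover x G ε ↑N), (N.card : ℝ≥0∞)

end Agb

open Agb

/-!
Write `n = 2 ^ r` and split `X = [n·s]` into `s` blocks, each a copy of the Boolean cube
`{0,1}^r`; `B` consists of the functions that on every block are a signed Walsh character.
The correlation of `f` with `D` is `∑ₓ v x * f x`, where `v x` is the mass of `(x, +1)` minus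
that of `(x, -1)`, so no binary `f` beats `‖v‖₁`. On each block, Parseval for the Walsh basis
and Cauchy–Schwarz give a character whose correlation with `v` is at least `2^{-r/2}` times the
`ℓ₁`-mass of `v` there; choosing the sign per block yields `h ∈ B` with correlation at least
`‖v‖₁ / √n`. The learner maximises empirical correlation over `B`: by Hoeffding and a union
bound over the `2|B|` one-sided deviations, with probability `≥ 1 - δ₀` every empirical
correlation is within `ε₀ / 2` of the true one, so the maximiser loses at most `ε₀` against `h`.
-/

open ProbabilityTheory Finset

namespace Agb

section Hoeffding

variable {α : Type*} [MeasurableSpace α] (D : Measure α) [IsProbabilityMeasure D]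

theorem measureReal_pi_sum_sub_integral_ge_le (m : ℕ) {g : α → ℝ} (hg : Measurable g)
    {a b : ℝ} (hab : ∀ z, g z ∈ Set.Icc a b) {t : ℝ} (ht : 0 ≤ t) :
    (Measure.pi fun _ : Fin m => D).real {S | t ≤ ∑ i, (g (S i) - ∫ z, g z ∂D)} ≤
      exp (-2 * t ^ 2 / (m * (b - a) ^ 2)) := by
  have hsubG : ∀ i : Fin m, HasSubgaussianMGF (fun S : Fin m → α => g (S i) - ∫ z, g z ∂D)
      ((‖b - a‖₊ / 2) ^ 2) (Measure.pi fun _ => D) := by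
    intro i
    have h := hasSubgaussianMGF_of_mem_Icc (μ := Measure.pi fun _ : Fin m => D)
      (X := fun S => g (S i)) (hg.comp (measurable_pi_apply i)).aemeasurable
      (ae_of_all _ fun S => hab (S i))
    rwa [integral_comp_eval hg.aestronglyMeasurable] at h
  have hindep : iIndepFun (fun (i : Fin m) (S : Fin m → α) => g (S i) - ∫ z, g z ∂D)
      (Measure.pi fun _ => D) :=
    iIndepFun_pi (X := fun _ z => g z - ∫ z, g z ∂D) fun _ => (hg.sub_const _).aemeasurable
  refine (HasSubgaussianMGF.measure_sum_ge_le_of_iIndepFun hindep (s := univ)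
    (fun i _ => hsubG i) ht).trans_eq ?_
  have hc : 2 * ((∑ _i : Fin m, (‖b - a‖₊ / 2) ^ 2 : ℝ≥0) : ℝ) = m * (b - a) ^ 2 / 2 := by
    simp only [sum_const, card_univ, Fintype.card_fin, nsmul_eq_mul, NNReal.coe_mul,
      NNReal.coe_natCast, NNReal.coe_pow, NNReal.coe_div, NNReal.coe_ofNat, coe_nnnorm,
      Real.norm_eq_abs]
    rw [div_pow, sq_abs]
    ring
  rw [hc, div_div_eq_mul_div]
  ring_nf

theorem measure_pi_abs_sum_sub_integral_ge_le (m : ℕ) {g : α → ℝ} (hg : Measurable g)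
    {a b : ℝ} (hab : ∀ z, g z ∈ Set.Icc a b) {t : ℝ} (ht : 0 ≤ t) :
    Measure.pi (fun _ : Fin m => D) {S | t ≤ |∑ i, (g (S i) - ∫ z, g z ∂D)|} ≤
      ENNReal.ofReal (2 * exp (-2 * t ^ 2 / (m * (b - a) ^ 2))) := by
  have hupper := measureReal_pi_sum_sub_integral_ge_le D m hg hab ht
  have hlower := measureReal_pi_sum_sub_integral_ge_le D m hg.neg (a := -b) (b := -a)
    (fun z => ⟨neg_le_neg (hab z).2, neg_le_neg (hab z).1⟩) ht
  rw [show -a - -b = b - a by ring] at hlower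
  have hsplit : {S : Fin m → α | t ≤ |∑ i, (g (S i) - ∫ z, g z ∂D)|} ⊆
      {S | t ≤ ∑ i, (g (S i) - ∫ z, g z ∂D)} ∪
        {S | t ≤ ∑ i, ((-g) (S i) - ∫ z, (-g) z ∂D)} := by
    intro S hS
    simpa [le_abs, integral_neg, ← sub_eq_neg_add, sum_neg_distrib] using hS
  calc _ ≤ _ := (measure_mono hsplit).trans (measure_union_le _ _)
    _ = ENNReal.ofReal ((Measure.pi fun _ : Fin m => D).real
            {S | t ≤ ∑ i, (g (S i) - ∫ z, g z ∂D)}) +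
          ENNReal.ofReal ((Measure.pi fun _ : Fin m => D).real
            {S | t ≤ ∑ i, ((-g) (S i) - ∫ z, (-g) z ∂D)}) := by
        rw [ofReal_measureReal, ofReal_measureReal]
    _ ≤ _ := add_le_add (ENNReal.ofReal_le_ofReal hupper) (ENNReal.ofReal_le_ofReal hlower)
    _ = _ := by rw [← ENNReal.ofReal_add (by positivity) (by positivity), two_mul]

end Hoeffding

section Walsh

variable {r : ℕ}

/-- `walsh a b = (-1) ^ ⟨a, b⟩`: the rows of the Sylvester–Hadamard matrix of order `2 ^ r`. -/
def walsh (a b : Fin r → Bool) : ℝ := ∏ i, if a i && b i then -1 else 1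

lemma walsh_eq_one_or_eq_neg_one (a b : Fin r → Bool) : walsh a b = 1 ∨ walsh a b = -1 := by
  refine prod_induction _ (fun x : ℝ => x = 1 ∨ x = -1) ?_ (Or.inl rfl) fun i _ => ?_
  · rintro x y (rfl | rfl) (rfl | rfl) <;> norm_num
  · split_ifs <;> simp

lemma walsh_false (a : Fin r → Bool) : walsh a (fun _ => false) = 1 := by
  simp [walsh]

lemma walsh_single (a : Fin r → Bool) (i : Fin r) :
    walsh a (fun j => decide (j = i)) = if a i then -1 else 1 := by
  rw [walsh, prod_eq_single i (fun j _ hj => by simp [hj]) (by simp)]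
  simp

lemma sum_walsh_mul_walsh (b b' : Fin r → Bool) :
    ∑ a, walsh a b * walsh a b' = if b = b' then 2 ^ r else 0 := by
  simp_rw [walsh, ← prod_mul_distrib]
  rw [← Fintype.prod_sum (fun i (t : Bool) => (if t && b i then (-1 : ℝ) else 1) *
    if t && b' i then -1 else 1)]
  have hfactor : ∀ i, ∑ t : Bool, (if t && b i then (-1 : ℝ) else 1) *
      (if t && b' i then -1 else 1) = if b i = b' i then 2 else 0 := fun i => by
    cases b i <;> cases b' i <;> norm_num
  simp_rw [hfactor]
  split_ifs with h
  · simp [h]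
  · obtain ⟨i, hi⟩ := Function.ne_iff.1 h
    exact prod_eq_zero (mem_univ i) (if_neg hi)

lemma sum_sq_walsh_transform (v : (Fin r → Bool) → ℝ) :
    ∑ a, (∑ b, v b * walsh a b) ^ 2 = 2 ^ r * ∑ b, v b ^ 2 := by
  have hexpand : ∀ a, (∑ b, v b * walsh a b) ^ 2 =
      ∑ b, ∑ b', v b * v b' * (walsh a b * walsh a b') := fun a => by
    rw [sq, sum_mul_sum]
    exact sum_congr rfl fun b _ => sum_congr rfl fun b' _ => by ring
  calc ∑ a, (∑ b, v b * walsh a b) ^ 2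
      = ∑ b, ∑ b', v b * v b' * ∑ a, walsh a b * walsh a b' := by
        simp_rw [hexpand, mul_sum]
        rw [sum_comm]
        exact sum_congr rfl fun b _ => sum_comm
    _ = 2 ^ r * ∑ b, v b ^ 2 := by
        simp_rw [sum_walsh_mul_walsh, mul_ite, mul_zero, sum_ite_eq, mem_univ, if_true, mul_sum]
        exact sum_congr rfl fun b _ => by ring

lemma exists_sum_abs_le_sqrt_mul_abs_walsh (v : (Fin r → Bool) → ℝ) :
    ∃ a, ∑ b, |v b| ≤ √(2 ^ r) * |∑ b, v b * walsh a b| := by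
  obtain ⟨a, -, ha⟩ : ∃ a ∈ univ, ∑ b, v b ^ 2 ≤ (∑ b, v b * walsh a b) ^ 2 := by
    refine exists_le_of_sum_le univ_nonempty ?_
    rw [sum_sq_walsh_transform, sum_const, card_univ, Fintype.card_fun, Fintype.card_bool,
      Fintype.card_fin, nsmul_eq_mul]
    push_cast
    rfl
  refine ⟨a, ?_⟩
  have hcs : (∑ b, |v b|) ^ 2 ≤ 2 ^ r * (∑ b, v b * walsh a b) ^ 2 := by
    calc (∑ b, |v b|) ^ 2 ≤ (univ : Finset (Fin r → Bool)).card * ∑ b, |v b| ^ 2 :=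
          sq_sum_le_card_mul_sum_sq
      _ = 2 ^ r * ∑ b, v b ^ 2 := by simp
      _ ≤ 2 ^ r * (∑ b, v b * walsh a b) ^ 2 := by gcongr
  calc ∑ b, |v b| = √((∑ b, |v b|) ^ 2) := (sqrt_sq (sum_nonneg fun b _ => abs_nonneg _)).symm
    _ ≤ √(2 ^ r * (∑ b, v b * walsh a b) ^ 2) := sqrt_le_sqrt hcs
    _ = √(2 ^ r) * |∑ b, v b * walsh a b| := by rw [sqrt_mul (by positivity), sqrt_sq_eq_abs]

end Walsh

section BlockWalsh

variable {ι : Type*} {r : ℕ}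

lemma bval_eq_one_or_eq_neg_one (y : Bool) : bval y = 1 ∨ bval y = -1 := by
  cases y <;> simp [bval]

lemma bval_injective : Function.Injective bval := by
  intro y y'
  cases y <;> cases y' <;> norm_num [bval]

lemma IsBinary.abs_le_one {X : Type*} {h : X → ℝ} (hh : IsBinary h) (x : X) : |h x| ≤ 1 := by
  rcases hh x with hx | hx <;> simp [hx]

lemma bval_decide_nonneg_mul_self (t : ℝ) : bval (decide (0 ≤ t)) * t = |t| := by
  by_cases ht : 0 ≤ t
  · simp [bval, ht, abs_of_nonneg ht]
  · simp [bval, ht, abs_of_neg (not_le.1 ht)]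

def blockWalsh (c : ι → Bool × (Fin r → Bool)) (x : ι × (Fin r → Bool)) : ℝ :=
  bval (c x.1).1 * walsh (c x.1).2 x.2

lemma isBinary_blockWalsh (c : ι → Bool × (Fin r → Bool)) : IsBinary (blockWalsh c) := by
  intro x
  rcases bval_eq_one_or_eq_neg_one (c x.1).1 with h | h <;>
    rcases walsh_eq_one_or_eq_neg_one (c x.1).2 x.2 with h' | h' <;> simp [blockWalsh, h, h']

lemma blockWalsh_injective : Function.Injective (blockWalsh (ι := ι) (r := r)) := by
  intro c c' h
  funext k
  have hsign : (c k).1 = (c' k).1 :=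
    bval_injective (by simpa [blockWalsh, walsh_false] using congrFun h (k, fun _ => false))
  refine Prod.ext hsign (funext fun i => ?_)
  have hi := congrFun h (k, fun j => decide (j = i))
  simp only [blockWalsh, walsh_single, hsign] at hi
  have hne : bval (c' k).1 ≠ 0 := by
    rcases bval_eq_one_or_eq_neg_one (c' k).1 with h | h <;> simp [h]
  have := mul_left_cancel₀ hne hi
  revert this
  cases (c k).2 i <;> cases (c' k).2 i <;> norm_num

lemma exists_sum_abs_le_sqrt_mul_sum_blockWalsh [Fintype ι] (v : ι × (Fin r → Bool) → ℝ) :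
    ∃ c, ∑ x, |v x| ≤ √(2 ^ r) * ∑ x, v x * blockWalsh c x := by
  choose a ha using fun k => exists_sum_abs_le_sqrt_mul_abs_walsh fun b => v (k, b)
  refine ⟨fun k => (decide (0 ≤ ∑ b, v (k, b) * walsh (a k) b), a k), ?_⟩
  simp only [Fintype.sum_prod_type, mul_sum]
  refine sum_le_sum fun k _ => (ha k).trans_eq ?_
  simp only [blockWalsh, ← mul_sum]
  congr 1
  rw [← bval_decide_nonneg_mul_self, mul_sum]
  exact sum_congr rfl fun b _ => by ring

end BlockWalsh

section Correlation

variable {X : Type*} [MeasurableSpace X]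

def labelBias (D : Measure (X × Bool)) (x : X) : ℝ := D.real {(x, true)} - D.real {(x, false)}

variable [Fintype X] [MeasurableSingletonClass X]

lemma corr_eq_sum_labelBias_mul (D : Measure (X × Bool)) [IsFiniteMeasure D] (h : X → ℝ) :
    corr D h = ∑ x, labelBias D x * h x := by
  rw [corr, integral_fintype .of_finite, Fintype.sum_prod_type]
  refine sum_congr rfl fun x _ => ?_
  simp [labelBias, bval]
  ring

lemma iSup_corr_isBinary_le (D : Measure (X × Bool)) [IsFiniteMeasure D] :
    ⨆ f ∈ {f : X → ℝ | IsBinary f}, corr D f ≤ ∑ x, |labelBias D x| := by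
  have hnonneg : 0 ≤ ∑ x, |labelBias D x| := sum_nonneg fun x _ => abs_nonneg _
  refine Real.iSup_le (fun f => Real.iSup_le (fun hf => ?_) hnonneg) hnonneg
  rw [corr_eq_sum_labelBias_mul]
  refine sum_le_sum fun x _ => ?_
  rcases hf x with h | h <;> simp [h, le_abs_self, neg_le_abs]

lemma exists_sum_abs_labelBias_le_sqrt_mul_corr {ι : Type*} [Fintype ι] {r : ℕ}
    (E : ι × (Fin r → Bool) ≃ X) (D : Measure (X × Bool)) [IsFiniteMeasure D] :
    ∃ c, ∑ x, |labelBias D x| ≤ √(2 ^ r) * corr D (blockWalsh c ∘ E.symm) := by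
  obtain ⟨c, hc⟩ := exists_sum_abs_le_sqrt_mul_sum_blockWalsh (labelBias D ∘ E)
  refine ⟨c, ?_⟩
  rw [corr_eq_sum_labelBias_mul, ← E.sum_comp (fun x => |labelBias D x|), ← E.sum_comp]
  simpa using hc

end Correlation

section ERM

variable {X C : Type*} [Fintype C] [Nonempty C]

def empCorr (ℓ : List (X × Bool)) (h : X → ℝ) : ℝ := (ℓ.map fun p => bval p.2 * h p.1).sum

def ermIndex (hyp : C → X → ℝ) (ℓ : List (X × Bool)) : C :=
  (exists_max_image univ (fun c => empCorr ℓ (hyp c)) univ_nonempty).choose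

lemma empCorr_le_ermIndex (hyp : C → X → ℝ) (ℓ : List (X × Bool)) (c : C) :
    empCorr ℓ (hyp c) ≤ empCorr ℓ (hyp (ermIndex hyp ℓ)) :=
  (exists_max_image univ (fun c => empCorr ℓ (hyp c)) univ_nonempty).choose_spec.2 c (mem_univ c)

lemma empCorr_ofFn {m : ℕ} (S : Fin m → X × Bool) (h : X → ℝ) :
    empCorr (List.ofFn S) h = ∑ i, bval (S i).2 * h (S i).1 := by
  simp [empCorr, List.sum_ofFn]

lemma corr_ermIndex_ge_of_forall_abs_lt [MeasurableSpace X] (hyp : C → X → ℝ)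
    (D : Measure (X × Bool)) {m : ℕ} (S : Fin m → X × Bool) {ε : ℝ}
    (hdev : ∀ c, |empCorr (List.ofFn S) (hyp c) - m * corr D (hyp c)| < m * ε / 2) (c : C) :
    corr D (hyp c) - ε ≤ corr D (hyp (ermIndex hyp (List.ofFn S))) := by
  have hemp := empCorr_le_ermIndex hyp (List.ofFn S) c
  obtain ⟨-, hhat⟩ := abs_lt.1 (hdev (ermIndex hyp (List.ofFn S)))
  obtain ⟨hc, -⟩ := abs_lt.1 (hdev c)
  refine (lt_of_mul_lt_mul_left ?_ (Nat.cast_nonneg m)).le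
  linarith

lemma iid_le_abs_empCorr_sub_corr_le [MeasurableSpace X] {h : X → ℝ} (hmeas : Measurable h)
    (hbd : ∀ x, |h x| ≤ 1) (D : Measure (X × Bool)) [IsProbabilityMeasure D] (m : ℕ)
    {ε : ℝ} (hε : 0 ≤ ε) :
    iid D m {S | m * ε / 2 ≤ |empCorr (List.ofFn S) h - m * corr D h|} ≤
      ENNReal.ofReal (2 * exp (-(m * ε ^ 2 / 8))) := by
  set g : X × Bool → ℝ := fun z => bval z.2 * h z.1
  have hg_meas : Measurable g :=
    ((measurable_of_countable bval).comp measurable_snd).mul (hmeas.comp measurable_fst)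
  have hg_mem : ∀ z, g z ∈ Set.Icc (-1) 1 := fun z => by
    rw [Set.mem_Icc, ← abs_le, abs_mul]
    rcases bval_eq_one_or_eq_neg_one z.2 with hz | hz <;> simpa [hz] using hbd z.1
  have hexp : -2 * (m * ε / 2) ^ 2 / (m * (1 - -1) ^ 2) = -(m * ε ^ 2 / 8) := by
    rcases eq_or_ne (m : ℝ) 0 with hm | hm
    · rw [hm]
      simp
    · field_simp
      ring
  have hset : {S : Fin m → X × Bool | m * ε / 2 ≤ |empCorr (List.ofFn S) h - m * corr D h|} =
      {S | m * ε / 2 ≤ |∑ i, (g (S i) - ∫ z, g z ∂D)|} := by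
    simp [empCorr_ofFn, sum_sub_distrib, corr, g]
  rw [hset, ← hexp]
  exact measure_pi_abs_sum_sub_integral_ge_le D m hg_meas hg_mem (by positivity)

theorem ofReal_le_iid_corr_ermIndex [MeasurableSpace X] (hyp : C → X → ℝ)
    (hmeas : ∀ c, Measurable (hyp c)) (hbd : ∀ c x, |hyp c x| ≤ 1) (D : Measure (X × Bool))
    [IsProbabilityMeasure D] (m : ℕ) {ε : ℝ} (hε : 0 ≤ ε) :
    ENNReal.ofReal (1 - 2 * Fintype.card C * exp (-(m * ε ^ 2 / 8))) ≤
      iid D m {S | ∀ c, corr D (hyp c) - ε ≤ corr D (hyp (ermIndex hyp (List.ofFn S)))} := by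
  set bad : C → Set (Fin m → X × Bool) :=
    fun c => {S | m * ε / 2 ≤ |empCorr (List.ofFn S) (hyp c) - m * corr D (hyp c)|}
  have hunion : iid D m (⋃ c, bad c) ≤
      ENNReal.ofReal (2 * Fintype.card C * exp (-(m * ε ^ 2 / 8))) := by
    refine (measure_iUnion_fintype_le _ _).trans ((sum_le_sum fun c _ =>
      iid_le_abs_empCorr_sub_corr_le (hmeas c) (hbd c) D m hε).trans_eq ?_)
    rw [sum_const, card_univ, nsmul_eq_mul, ← ENNReal.ofReal_natCast,
      ← ENNReal.ofReal_mul (by positivity)]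
    congr 1
    ring
  have hgood : (⋃ c, bad c)ᶜ ⊆
      {S | ∀ c, corr D (hyp c) - ε ≤ corr D (hyp (ermIndex hyp (List.ofFn S)))} := by
    intro S hS
    simp only [bad, Set.mem_compl_iff, Set.mem_iUnion, not_exists, Set.mem_ofPred_eq,
      not_le] at hS
    exact corr_ermIndex_ge_of_forall_abs_lt hyp D S hS
  have : IsProbabilityMeasure (iid D m) := by unfold iid; infer_instance
  calc ENNReal.ofReal (1 - 2 * Fintype.card C * exp (-(m * ε ^ 2 / 8)))
      = 1 - ENNReal.ofReal (2 * Fintype.card C * exp (-(m * ε ^ 2 / 8))) := by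
        rw [ENNReal.ofReal_sub _ (by positivity), ENNReal.ofReal_one]
    _ ≤ 1 - iid D m (⋃ c, bad c) := tsub_le_tsub_left hunion 1
    _ ≤ iid D m (⋃ c, bad c)ᶜ := by
        rw [tsub_le_iff_left, ← measure_univ (μ := iid D m)]
        exact measure_univ_le_add_compl _
    _ ≤ _ := measure_mono hgood

end ERM

lemma two_mul_mul_exp_le_of_ceil_le {K δ ε : ℝ} {m : ℕ} (hK : 0 < K) (hδ : 0 < δ)
    (hε : 0 < ε) (hm : ⌈8 * log (2 * K / δ) / ε ^ 2⌉₊ ≤ m) :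
    2 * K * exp (-(m * ε ^ 2 / 8)) ≤ δ := by
  have hlog : log (2 * K / δ) ≤ m * ε ^ 2 / 8 := by
    have := Nat.ceil_le.1 hm
    rw [div_le_iff₀ (by positivity)] at this
    linarith
  calc 2 * K * exp (-(m * ε ^ 2 / 8)) ≤ 2 * K * exp (-log (2 * K / δ)) := by gcongr
    _ = δ := by
        rw [exp_neg, exp_log (by positivity)]
        field_simp

end Agb

theorem statement12_general (n s : ℕ) (hpow : ∃ r : ℕ, n = 2 ^ r)
    (ε₀ δ₀ : ℝ) (hε₀0 : 0 < ε₀) (hδ₀0 : 0 < δ₀) :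
    ∃ B : Set (Fin (n * s) → ℝ),
      (∀ h ∈ B, IsBinary h) ∧ B.ncard = (2 * n) ^ s ∧
      ∀ m₀ : ℕ, ⌈8 * Real.log (2 * B.ncard / δ₀) / ε₀ ^ 2⌉₊ ≤ m₀ →
        ∃ W, IsAWL (1 / Real.sqrt n) ε₀ δ₀ m₀ {f | IsBinary f} B W := by
  obtain ⟨r, rfl⟩ := hpow
  obtain ⟨E⟩ : Nonempty (Fin s × (Fin r → Bool) ≃ Fin (2 ^ r * s)) :=
    Fintype.card_eq.1 (by simp [mul_comm])
  set hyp : (Fin s → Bool × (Fin r → Bool)) → Fin (2 ^ r * s) → ℝ :=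
    fun c => blockWalsh c ∘ E.symm
  have hncard : (Set.range hyp).ncard = Fintype.card (Fin s → Bool × (Fin r → Bool)) := by
    rw [Set.ncard_range_of_injective (f := hyp)
      (E.symm.surjective.injective_comp_right.comp blockWalsh_injective),
      Nat.card_eq_fintype_card]
  refine ⟨Set.range hyp, ?_, by simp [hncard], fun m₀ hm₀ =>
    ⟨fun ℓ => hyp (ermIndex hyp ℓ), fun ℓ => Set.mem_range_self _, fun D _ => ?_⟩⟩
  · rintro _ ⟨c, rfl⟩ x
    exact isBinary_blockWalsh c (E.symm x)
  obtain ⟨c₀, hc₀⟩ := exists_sum_abs_labelBias_le_sqrt_mul_corr E D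
  have hbest :
      1 / √((2 ^ r : ℕ) : ℝ) * ⨆ f ∈ {f | IsBinary f}, corr D f ≤ corr D (hyp c₀) := by
    rw [one_div, inv_mul_le_iff₀ (by positivity), Nat.cast_pow, Nat.cast_ofNat]
    exact (iSup_corr_isBinary_le D).trans hc₀
  have hδ : 1 - δ₀ ≤ 1 - 2 * Fintype.card (Fin s → Bool × (Fin r → Bool)) *
      exp (-(m₀ * ε₀ ^ 2 / 8)) := by
    rw [hncard] at hm₀
    linarith [two_mul_mul_exp_le_of_ceil_le (by positivity) hδ₀0 hε₀0 hm₀]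
  refine (ENNReal.ofReal_le_ofReal hδ).trans ((ofReal_le_iid_corr_ermIndex hyp
    (fun c => measurable_of_finite _) (fun c x => (isBinary_blockWalsh c).abs_le_one _) D m₀
    hε₀0.le).trans (measure_mono fun S hS => (sub_le_sub_right hbest _).trans (hS c₀)))

/-- construction of a hard instance: Lemma on the existence of a weak
learner from Hadamard vectors. For integers `n, s > 0` with `n` a power of `2` and
`ε₀, δ₀ ∈ (0,1]`, there exist a universe `X = [n·s]`, a base class `B ⊆ {±1}^X` with
`|B| = (2n)^s`, the reference class `F = {±1}^X` of all binary functions, and a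
`(1/√n, ε₀, δ₀, m₀, F, B)` agnostic weak learner for every `m₀ ≥ ⌈8 ln(2|B|/δ₀)/ε₀²⌉`. -/
theorem statement12 (n s : ℕ) (hn : 0 < n) (hs : 0 < s) (hpow : ∃ r : ℕ, n = 2 ^ r)
    (ε₀ δ₀ : ℝ) (hε₀0 : 0 < ε₀) (hε₀1 : ε₀ ≤ 1) (hδ₀0 : 0 < δ₀) (hδ₀1 : δ₀ ≤ 1) :
    ∃ B : Set (Fin (n * s) → ℝ),
      (∀ h ∈ B, IsBinary h) ∧ B.ncard = (2 * n) ^ s ∧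
      ∀ m₀ : ℕ, ⌈8 * Real.log (2 * B.ncard / δ₀) / ε₀ ^ 2⌉₊ ≤ m₀ →
        ∃ W, IsAWL (1 / Real.sqrt n) ε₀ δ₀ m₀ {f | IsBinary f} B W :=
  statement12_general n s hpow ε₀ δ₀ hε₀0 hδ₀0
end
end

section
/- Let n be a positive integer and let v^(1), …, v^(n) ∈ {±1}^n be pairwise orthogonal (⟨v^(i), v^(j)⟩ = 0 for i ≠ j). Then for every probability vector D ∈ [0,1]^n with Σ_{j=1}^n D_j = 1 and every labeling y ∈ {±1}^n, there exist i ∈ [n] and σ ∈ {±1} such that Σ_{j=1}^n D_j·y_j·σ·v^(i)_j ≥ 1/√n. -/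
open MeasureTheory Real
open scoped ENNReal NNReal

noncomputable section

open Agb
open Matrix

/-- Hadamard-type correlation lower bound. If `v⁽¹⁾,…,v⁽ⁿ⁾ ∈ {±1}ⁿ`
are pairwise orthogonal, then for every probability vector `D` on `[n]` and every labeling
`y ∈ {±1}ⁿ` there are `i ∈ [n]` and a sign `σ ∈ {±1}` with
`Σ_j D_j·y_j·σ·v⁽ⁱ⁾_j ≥ 1/√n`. -/
theorem statement14 (n : ℕ) (hn : 0 < n) (v : Fin n → Fin n → ℝ)
    (hbin : ∀ i j, v i j = 1 ∨ v i j = -1)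
    (horth : ∀ i i', i ≠ i' → ∑ j, v i j * v i' j = 0)
    (D : Fin n → ℝ) (hD0 : ∀ j, 0 ≤ D j) (hD1 : ∑ j, D j = 1)
    (y : Fin n → ℝ) (hy : ∀ j, y j = 1 ∨ y j = -1) :
    ∃ (i : Fin n) (σ : ℝ), (σ = 1 ∨ σ = -1) ∧
      1 / Real.sqrt n ≤ ∑ j, D j * y j * σ * v i j := by
  have hvsq : ∀ i j, v i j * v i j = 1 := by
    intro i j; rcases hbin i j with h | h <;> rw [h] <;> ring
  have hysq : ∀ j, y j * y j = 1 := by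
    intro j; rcases hy j with h | h <;> rw [h] <;> ring
  set M : Matrix (Fin n) (Fin n) ℝ := Matrix.of v with hM
  have hMMT : M * Mᵀ = (n : ℝ) • 1 := by
    ext i i'
    simp only [Matrix.mul_apply, Matrix.transpose_apply, Matrix.smul_apply,
      Matrix.one_apply, hM, Matrix.of_apply]
    by_cases h : i = i'
    · subst h; simp [hvsq]
    · simp [h, horth i i' h]
  have hn' : (n : ℝ) ≠ 0 := Nat.cast_ne_zero.mpr hn.ne'
  have hinv : M * ((n : ℝ)⁻¹ • Mᵀ) = 1 := by
    rw [Matrix.mul_smul, hMMT, smul_smul, inv_mul_cancel₀ hn', one_smul]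
  have hTM : Mᵀ * M = (n : ℝ) • 1 := by
    have h1 := mul_eq_one_comm.mp hinv
    calc Mᵀ * M = (n : ℝ) • (((n : ℝ)⁻¹ • Mᵀ) * M) := by
          rw [Matrix.smul_mul, smul_smul, mul_inv_cancel₀ hn', one_smul]
      _ = (n : ℝ) • 1 := by rw [h1]
  have hcol : ∀ j k : Fin n, ∑ i, v i j * v i k = if j = k then (n : ℝ) else 0 := by
    intro j k
    have h2 := congrFun (congrFun hTM j) k
    simp only [Matrix.mul_apply, Matrix.transpose_apply, Matrix.smul_apply,
      Matrix.one_apply, hM, Matrix.of_apply, smul_eq_mul] at h2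
    rw [h2]; by_cases h : j = k <;> simp [h]
  set c : Fin n → ℝ := fun i => ∑ j, D j * y j * v i j with hc
  have hsum : ∑ i, (c i) ^ 2 = (n : ℝ) * ∑ j, (D j) ^ 2 := by
    have hexp : ∀ i, (c i) ^ 2 = ∑ j, ∑ k, (D j * y j * D k * y k) * (v i j * v i k) := by
      intro i
      rw [hc, sq, Finset.sum_mul_sum]
      exact Finset.sum_congr rfl fun j _ => Finset.sum_congr rfl fun k _ => by ring
    calc ∑ i, (c i) ^ 2
        = ∑ j, ∑ k, (D j * y j * D k * y k) * ∑ i, (v i j * v i k) := by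
          simp only [hexp]
          rw [Finset.sum_comm]
          refine Finset.sum_congr rfl fun j _ => ?_
          rw [Finset.sum_comm]
          exact Finset.sum_congr rfl fun k _ => (Finset.mul_sum _ _ _).symm
      _ = ∑ j, (D j * y j * D j * y j) * n := by
          simp only [hcol, mul_ite, mul_zero, Finset.sum_ite_eq, Finset.mem_univ, if_true]
      _ = (n : ℝ) * ∑ j, (D j) ^ 2 := by
          rw [Finset.mul_sum]
          refine Finset.sum_congr rfl fun j _ => ?_
          linear_combination (D j ^ 2 * (n : ℝ)) * hysq j
  have hCS : (1 : ℝ) ≤ (n : ℝ) * ∑ j, (D j) ^ 2 := by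
    have := sq_sum_le_card_mul_sum_sq (s := (Finset.univ : Finset (Fin n))) (f := D)
    simpa [hD1] using this
  have hex : ∃ i : Fin n, (1 : ℝ) / n ≤ (c i) ^ 2 := by
    by_contra hcon
    push_neg at hcon
    have hlt : ∑ i, (c i) ^ 2 < ∑ _i : Fin n, (1 : ℝ) / n :=
      Finset.sum_lt_sum_of_nonempty (Finset.univ_nonempty_iff.mpr ⟨⟨0, hn⟩⟩)
        fun i _ => hcon i
    rw [Finset.sum_const, Finset.card_univ, Fintype.card_fin, nsmul_eq_mul,
      mul_one_div, div_self hn'] at hlt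
    rw [hsum] at hlt
    linarith
  obtain ⟨i, hi⟩ := hex
  refine ⟨i, if 0 ≤ c i then 1 else -1, by split <;> simp, ?_⟩
  have habs : 1 / Real.sqrt n ≤ |c i| := by
    have h1 : Real.sqrt (1 / n) ≤ Real.sqrt ((c i) ^ 2) := Real.sqrt_le_sqrt hi
    rw [Real.sqrt_sq_eq_abs] at h1
    have heq : 1 / Real.sqrt n = Real.sqrt (1 / n) := by
      rw [one_div, one_div, Real.sqrt_inv]
    rw [heq]; exact h1
  have hrw : ∑ j, D j * y j * (if 0 ≤ c i then (1:ℝ) else -1) * v i j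
      = (if 0 ≤ c i then (1:ℝ) else -1) * c i := by
    rw [hc, Finset.mul_sum]
    exact Finset.sum_congr rfl fun j _ => by ring
  rw [hrw]
  rcases le_or_gt 0 (c i) with h | h
  · rw [if_pos h, one_mul]; rwa [abs_of_nonneg h] at habs
  · rw [if_neg (not_le.mpr h)]; rw [abs_of_neg h] at habs; linarith
end
end

section
/- For every real x with 0 ≤ x < 1, one has x²/16 + (1 − x/8)·ln(1 − x) + (1 + x/8)·ln(1 + x) ≤ 0; equivalently, for 0 < γ' < 1 and β = γ'/8, (1 − β)·ln(1 − γ') + (1 + β)·ln(1 + γ') ≤ −γ'²/16. -/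
/-- the key elementary inequality behind AdaBoost's exponential decay.
For `0 ≤ x < 1`, `x²/16 + (1 − x/8)ln(1 − x) + (1 + x/8)ln(1 + x) ≤ 0`; equivalently, for
`0 < γ' < 1` and `β = γ'/8`, `(1 − β)ln(1 − γ') + (1 + β)ln(1 + γ') ≤ −γ'²/16`. -/
theorem statement17 :
    (∀ x : ℝ, 0 ≤ x → x < 1 →
      x ^ 2 / 16 + (1 - x / 8) * Real.log (1 - x) + (1 + x / 8) * Real.log (1 + x) ≤ 0) ∧
    (∀ γ' : ℝ, 0 < γ' → γ' < 1 →
      (1 - γ' / 8) * Real.log (1 - γ') + (1 + γ' / 8) * Real.log (1 + γ') ≤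
        -γ' ^ 2 / 16) := by
  have main : ∀ x : ℝ, 0 ≤ x → x < 1 →
      x ^ 2 / 16 + (1 - x / 8) * Real.log (1 - x) + (1 + x / 8) * Real.log (1 + x) ≤ 0 := by
    intro x hx0 hx1
    have h1 : (0:ℝ) < 1 - x := by linarith
    have h2 : (0:ℝ) < 1 + x := by linarith
    have h3 : (0:ℝ) < 1 - x ^ 2 := by nlinarith
    have hL2le : Real.log (1 + x) ≤ x := by
      have := Real.log_le_sub_one_of_pos h2; linarith
    have hL2ge : 0 ≤ Real.log (1 + x) := Real.log_nonneg (by linarith)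
    have hsum : Real.log (1 - x) + Real.log (1 + x) ≤ -x ^ 2 := by
      have h := Real.log_le_sub_one_of_pos h3
      have he : Real.log (1 - x ^ 2) = Real.log (1 - x) + Real.log (1 + x) := by
        rw [← Real.log_mul (ne_of_gt h1) (ne_of_gt h2)]
        ring_nf
      rw [he] at h; linarith
    have hc : (0:ℝ) < 1 - x / 8 := by linarith
    have h4 : (1 - x / 8) * (Real.log (1 - x) + Real.log (1 + x)) ≤ (1 - x / 8) * (-x ^ 2) :=
      mul_le_mul_of_nonneg_left hsum (le_of_lt hc)
    have h5 : (x / 4) * Real.log (1 + x) ≤ (x / 4) * x :=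
      mul_le_mul_of_nonneg_left hL2le (by linarith)
    nlinarith [sq_nonneg x, mul_nonneg hx0 (sq_nonneg x)]
  exact ⟨main, fun γ' h0 h1 => by have := main γ' (le_of_lt h0) h1; linarith⟩
end
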